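/- The Virasoro module V_{0,1} has a unique nonzero proper submodule, namely V'_{0,1} = ⊕_{i ≠ 0} ℂ v_i. -/

import Mathlib

/-!
`d_0` acts diagonally on `V_{0,1}` with the pairwise distinct eigenvalues `d_0 v_k = k v_k`, so by
Lagrange interpolation in `d_0` every submodule is spanned by the basis vectors `v_k` it contains.
Since `d_n v_k = (k + n) v_{k+n}`, no `d_n` ever produces a `v_0`-component, so `V'_{0,1}` is a
submodule; and `d_{m-k} v_k = m v_m` shows that any `v_k` generates all `v_m` with `m ≠ 0`. Hence a
nonzero submodule contains `V'_{0,1}`, and it is everything as soon as it contains `v_0`.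
-/

open Finsupp TensorProduct

noncomputable section

/-- The underlying space of the Virasoro algebra: coordinates on the basis
`{d_n : n ∈ ℤ}` together with the coefficient of the central element `C`. -/
abbrev VirCarrier : Type := (ℤ →₀ ℂ) × ℂ

/-- The basis element `d_n`. -/
def dGen (n : ℤ) : VirCarrier := (Finsupp.single n 1, 0)

/-- The central element `C`. -/
def cGen : VirCarrier := (0, 1)

/-- `[d_m, d_n] = (n-m) d_{m+n} + δ_{m,-n} ((m³-m)/12) C`. -/
def dBracket (m n : ℤ) : VirCarrier :=
  (Finsupp.single (m + n) ((n : ℂ) - (m : ℂ)), if m = -n then ((m : ℂ) ^ 3 - (m : ℂ)) / 12 else 0)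

/-- The bilinear extension of the bracket on basis elements; the central element `C`
brackets to zero with everything (`[d_n, C] = 0`). -/
def virBracket (x y : VirCarrier) : VirCarrier :=
  x.1.sum fun m a => y.1.sum fun n b => (a * b) • dBracket m n

/-- Action of `d_n` on `V_{α,β}`: `d_n · v_k = (α + k + nβ) v_{k+n}`, where `v_k` is the
basis element `Finsupp.single k 1`. -/
def dAct (α β : ℂ) (n : ℤ) : Module.End ℂ (ℤ →₀ ℂ) :=
  Finsupp.lsum ℂ fun k => (α + (k : ℂ) + (n : ℂ) * β) • Finsupp.lsingle (k + n)

/-- The action of the Virasoro algebra on the intermediate series module `V_{α,β}`;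
`C` acts by zero. -/
def vabAction (α β : ℂ) : VirCarrier →ₗ[ℂ] Module.End ℂ (ℤ →₀ ℂ) :=
  (Finsupp.lsum ℂ fun n =>
    LinearMap.toSpanSingleton ℂ (Module.End ℂ (ℤ →₀ ℂ)) (dAct α β n)).comp
    (LinearMap.fst ℂ (ℤ →₀ ℂ) ℂ)

/-- A subspace invariant under an action. -/
def ActInvariant {L V : Type*} [AddCommGroup V] [Module ℂ V]
    (act : L → Module.End ℂ V) (U : Submodule ℂ V) : Prop :=
  ∀ x : L, ∀ v ∈ U, act x v ∈ U

/-- Irreducibility: the only invariant subspaces are `⊥` and `⊤`. -/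
def ActIrreducible {L V : Type*} [AddCommGroup V] [Module ℂ V]
    (act : L → Module.End ℂ V) : Prop :=
  ∀ U : Submodule ℂ V, ActInvariant act U → U = ⊥ ∨ U = ⊤

/-- The set `S` generates the module: any invariant subspace containing `S` is everything. -/
def ActGenerates {L V : Type*} [AddCommGroup V] [Module ℂ V]
    (act : L → Module.End ℂ V) (S : Set V) : Prop :=
  ∀ U : Submodule ℂ V, ActInvariant act U → S ⊆ U → U = ⊤

open Polynomial in
theorem Module.End.aeval_apply_mem_of_forall_mem {R M : Type*} [CommRing R] [AddCommGroup M]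
    [Module R M] {T : Module.End R M} {U : Submodule R M} (hU : ∀ x ∈ U, T x ∈ U) (p : R[X])
    {x : M} (hx : x ∈ U) : aeval T p x ∈ U := by
  induction p using Polynomial.induction_on' with
  | add p q hp hq => simpa only [map_add, LinearMap.add_apply] using U.add_mem hp hq
  | monomial n a =>
    rw [aeval_monomial, Module.End.mul_apply, Module.algebraMap_end_apply]
    exact U.smul_mem a (Module.End.pow_apply_mem_of_forall_mem n hU x hx)

theorem Finsupp.single_apply_mem_of_diagonal {ι K : Type*} [Field K] {w : ι → K}
    (hw : Function.Injective w) {T : Module.End K (ι →₀ K)}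
    (hT : ∀ k c, T (single k c) = w k • single k c) {U : Submodule K (ι →₀ K)}
    (hU : ∀ f ∈ U, T f ∈ U) {f : ι →₀ K} (hf : f ∈ U) (k : ι) : single k (f k) ∈ U := by
  classical
  by_cases hk : k ∈ f.support
  swap
  · rw [Finsupp.notMem_support_iff.mp hk, single_zero]
    exact U.zero_mem
  -- Lagrange interpolation: this polynomial in `T` kills every other component of `f`.
  set p : Polynomial K := ∏ j ∈ f.support.erase k, (Polynomial.X - Polynomial.C (w j))
  have hp_eval (m : ι) : p.eval (w m) = ∏ j ∈ f.support.erase k, (w m - w j) := by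
    simp [p, Polynomial.eval_prod]
  have hpk : p.eval (w k) ≠ 0 := by
    rw [hp_eval, Finset.prod_ne_zero_iff]
    intro j hj
    exact sub_ne_zero.mpr (hw.ne (Finset.ne_of_mem_erase hj).symm)
  have hpf : Polynomial.aeval T p f = p.eval (w k) • single k (f k) := by
    conv_lhs => rw [← f.sum_single, Finsupp.sum, map_sum]
    rw [Finset.sum_eq_single k]
    · exact Module.End.aeval_apply_of_mem_apply_eq_smul (hT k (f k))
    · intro m hm hmk
      rw [Module.End.aeval_apply_of_mem_apply_eq_smul (hT m (f m)), hp_eval,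
        Finset.prod_eq_zero (Finset.mem_erase.mpr ⟨hmk, hm⟩) (sub_self _), zero_smul]
    · exact fun h => (h hk).elim
  have := U.smul_mem (p.eval (w k))⁻¹ (Module.End.aeval_apply_mem_of_forall_mem hU p hf)
  rwa [hpf, inv_smul_smul₀ hpk] at this

theorem vabAction_dGen (α β : ℂ) (n : ℤ) : vabAction α β (dGen n) = dAct α β n := by
  simp [vabAction, dGen]

theorem ActInvariant.dAct {α β : ℂ} {U : Submodule ℂ (ℤ →₀ ℂ)}
    (hU : ActInvariant (fun x => vabAction α β x) U) : ActInvariant (dAct α β) U :=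
  fun n => by simpa only [vabAction_dGen] using hU (dGen n)

theorem dAct_single (α β : ℂ) (n k : ℤ) (c : ℂ) :
    dAct α β n (single k c) = (α + k + n * β) • single (k + n) c := by
  simp [dAct]

theorem dAct_zero_one_single (n k : ℤ) (c : ℂ) :
    dAct 0 1 n (single k c) = ((k + n : ℤ) : ℂ) • single (k + n) c := by
  simp [dAct_single]

theorem dAct_zero_one_apply_zero (n : ℤ) (f : ℤ →₀ ℂ) : dAct 0 1 n f 0 = 0 := by
  induction f using Finsupp.induction_linear with
  | zero => simp
  | add f g hf hg => simp [hf, hg]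
  | single k c =>
    rw [dAct_zero_one_single, Finsupp.smul_apply, Finsupp.single_apply]
    split_ifs with h <;> simp [h]

theorem vabAction_zero_one_apply_zero (x : VirCarrier) (f : ℤ →₀ ℂ) :
    vabAction 0 1 x f 0 = 0 := by
  simp [vabAction, Finsupp.sum, Finset.sum_apply, dAct_zero_one_apply_zero]

theorem span_single_one_ne_zero_eq_supported :
    Submodule.span ℂ {f : ℤ →₀ ℂ | ∃ i : ℤ, i ≠ 0 ∧ f = single i 1} = supported ℂ ℂ {0}ᶜ := by
  rw [supported_eq_span_single]
  congr 1
  ext f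
  simp [eq_comm]

theorem mem_supported_compl_zero_iff {f : ℤ →₀ ℂ} : f ∈ supported ℂ ℂ {0}ᶜ ↔ f 0 = 0 := by
  simp [mem_supported']

variable {U : Submodule ℂ (ℤ →₀ ℂ)}

theorem single_apply_mem_of_actInvariant (hU : ActInvariant (dAct 0 1) U) {f : ℤ →₀ ℂ}
    (hf : f ∈ U) (k : ℤ) : single k (f k) ∈ U :=
  single_apply_mem_of_diagonal (w := fun k : ℤ => (k : ℂ)) Int.cast_injective
    (by simpa using dAct_zero_one_single 0) (hU 0) hf k

theorem supported_compl_zero_le_of_single_mem (hU : ActInvariant (dAct 0 1) U) {k : ℤ} {c : ℂ}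
    (hc : c ≠ 0) (hk : single k c ∈ U) : supported ℂ ℂ {0}ᶜ ≤ U := by
  rw [supported_eq_span_single, Submodule.span_le]
  rintro _ ⟨m, hm, rfl⟩
  have hmc : (m : ℂ) * c ≠ 0 := mul_ne_zero (Int.cast_ne_zero.mpr hm) hc
  have := U.smul_mem ((m : ℂ) * c)⁻¹ (hU (m - k) _ hk)
  rwa [dAct_zero_one_single, add_sub_cancel, Finsupp.smul_single, smul_eq_mul,
    Finsupp.smul_single, smul_eq_mul, inv_mul_cancel₀ hmc] at this

theorem eq_top_of_single_zero_mem (hU : ActInvariant (dAct 0 1) U) {c : ℂ} (hc : c ≠ 0)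
    (h0 : single 0 c ∈ U) : U = ⊤ := by
  refine eq_top_iff.mpr fun f _ => ?_
  have hrest : f - single 0 (f 0) ∈ U :=
    supported_compl_zero_le_of_single_mem hU hc h0 (mem_supported_compl_zero_iff.mpr (by simp))
  have hf0 : single 0 (f 0) ∈ U := by
    simpa [smul_smul, hc] using U.smul_mem (f 0 / c) h0
  simpa using U.add_mem hrest hf0

theorem eq_supported_compl_zero_of_actInvariant (hU : ActInvariant (dAct 0 1) U) (hbot : U ≠ ⊥)
    (htop : U ≠ ⊤) : U = supported ℂ ℂ {0}ᶜ := by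
  refine le_antisymm (fun f hf => mem_supported_compl_zero_iff.mpr ?_) ?_
  · by_contra hf0
    exact htop (eq_top_of_single_zero_mem hU hf0 (single_apply_mem_of_actInvariant hU hf 0))
  · obtain ⟨f, hfU, hf⟩ := (Submodule.ne_bot_iff U).mp hbot
    obtain ⟨k, hk⟩ : ∃ k, f k ≠ 0 := by simpa [Finsupp.ext_iff] using hf
    exact supported_compl_zero_le_of_single_mem hU hk (single_apply_mem_of_actInvariant hU hfU k)

/-- `V_{0,1}` has a unique nonzero proper submodule, namely `V'_{0,1} = ⊕_{i ≠ 0} ℂ v_i`. -/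
theorem v01_unique_submodule :
    ActInvariant (fun x => vabAction 0 1 x)
        (Submodule.span ℂ {f : ℤ →₀ ℂ | ∃ i : ℤ, i ≠ 0 ∧ f = Finsupp.single i 1}) ∧
    Submodule.span ℂ {f : ℤ →₀ ℂ | ∃ i : ℤ, i ≠ 0 ∧ f = Finsupp.single i 1} ≠ ⊥ ∧
    Submodule.span ℂ {f : ℤ →₀ ℂ | ∃ i : ℤ, i ≠ 0 ∧ f = Finsupp.single i 1} ≠ ⊤ ∧
    (∀ U : Submodule ℂ (ℤ →₀ ℂ), ActInvariant (fun x => vabAction 0 1 x) U →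
      U ≠ ⊥ → U ≠ ⊤ →
      U = Submodule.span ℂ {f : ℤ →₀ ℂ | ∃ i : ℤ, i ≠ 0 ∧ f = Finsupp.single i 1}) := by
  simp only [span_single_one_ne_zero_eq_supported]
  refine ⟨fun x f _ => mem_supported_compl_zero_iff.mpr (vabAction_zero_one_apply_zero x f),
    ?_, ?_, fun U hU => eq_supported_compl_zero_of_actInvariant hU.dAct⟩
  · refine (Submodule.ne_bot_iff _).mpr ⟨single 1 1, ?_, by simp⟩
    exact mem_supported_compl_zero_iff.mpr (by simp)
  · intro h
    have h0 : single (0 : ℤ) (1 : ℂ) ∈ supported ℂ ℂ {0}ᶜ := h ▸ Submodule.mem_top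
    simp [mem_supported_compl_zero_iff] at h0
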